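/- arXiv:1602.07165 — 7 statements merged into one kernel-verified Lean document; each statement's English description precedes it below -/
import Mathlib

section
/- For every clock constraint φ over a nonempty finite set of clocks CX and every subset λ ⊆ CX of clocks, there exists a clock constraint resetPred(φ, λ) over CX such that for every clock valuation ν: ν ⊨ resetPred(φ, λ) if and only if ν[λ := 0] ⊨ φ. -/
/-- Clock valuations: each clock gets a non-negative real. -/
abbrev Val (C : Type) := C → NNReal

open Classical in
/-- `ν[λ := 0]`: reset the clocks in `lam` to zero. -/
noncomputable def resetVal {C : Type} (ν : Val C) (lam : Set C) : Val C :=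
  fun x => if x ∈ lam then 0 else ν x

/-- Clock constraints over the clock type `C`, generated by the grammar
`φ ::= x < c | x ≤ c | x > c | x ≥ c | φ ∧ φ` with `c` a non-negative integer. -/
inductive ClockConstraint (C : Type) where
  | lt (x : C) (c : ℕ)
  | le (x : C) (c : ℕ)
  | gt (x : C) (c : ℕ)
  | ge (x : C) (c : ℕ)
  | and (φ ψ : ClockConstraint C)

/-- Satisfaction `ν ⊨ φ` of a clock constraint by a clock valuation. -/
def sat {C : Type} (ν : Val C) : ClockConstraint C → Prop
  | ClockConstraint.lt x c => ν x < (c : NNReal)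
  | ClockConstraint.le x c => ν x ≤ (c : NNReal)
  | ClockConstraint.gt x c => (c : NNReal) < ν x
  | ClockConstraint.ge x c => (c : NNReal) ≤ ν x
  | ClockConstraint.and φ ψ => sat ν φ ∧ sat ν ψ

/-- For every clock constraint `φ` over a nonempty finite set of
clocks and every subset `λ` of clocks, there exists a clock constraint
`resetPred(φ, λ)` such that for every valuation `ν`:
`ν ⊨ resetPred(φ, λ)` iff `ν[λ := 0] ⊨ φ`. -/
theorem statement_0 {C : Type} [Fintype C] [Nonempty C]
    (φ : ClockConstraint C) (lam : Set C) :
    ∃ ψ : ClockConstraint C, ∀ ν : Val C, sat ν ψ ↔ sat (resetVal ν lam) φ := by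
  classical
  obtain ⟨y⟩ := ‹Nonempty C›
  induction φ with
  | lt x c =>
    by_cases h : x ∈ lam
    · by_cases hc : 0 < c
      · exact ⟨.ge y 0, fun ν => by
          simp [sat, resetVal, h, hc, Nat.cast_pos]⟩
      · exact ⟨.lt y 0, fun ν => by
          simp [sat, resetVal, h, Nat.eq_zero_of_not_pos hc]⟩
    · exact ⟨.lt x c, fun ν => by simp [sat, resetVal, h]⟩
  | le x c =>
    by_cases h : x ∈ lam
    · exact ⟨.ge y 0, fun ν => by simp [sat, resetVal, h]⟩
    · exact ⟨.le x c, fun ν => by simp [sat, resetVal, h]⟩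
  | gt x c =>
    by_cases h : x ∈ lam
    · exact ⟨.lt y 0, fun ν => by simp [sat, resetVal, h]⟩
    · exact ⟨.gt x c, fun ν => by simp [sat, resetVal, h]⟩
  | ge x c =>
    by_cases h : x ∈ lam
    · by_cases hc : c = 0
      · exact ⟨.ge y 0, fun ν => by simp [sat, resetVal, h, hc]⟩
      · exact ⟨.lt y 0, fun ν => by
          simp [sat, resetVal, h]
          exact hc⟩
    · exact ⟨.ge x c, fun ν => by simp [sat, resetVal, h]⟩
  | and φ₁ φ₂ ih₁ ih₂ =>
    obtain ⟨ψ₁, h₁⟩ := ih₁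
    obtain ⟨ψ₂, h₂⟩ := ih₂
    exact ⟨.and ψ₁ ψ₂, fun ν => by simp [sat, h₁ ν, h₂ ν]⟩
end

section
/- Let TA = (L, L₀, ∅, Σ, CX, I, E) be a timed automaton with an empty set of urgent locations. Then the reachable subsystems of TS'(TA) and TS(INV(TA)) are isomorphic: there is a bijection f from the reachable states of TS'(TA) onto the reachable states of TS(INV(TA)) such that f maps the initial states of TS'(TA) exactly onto the initial states of TS(INV(TA)), and for all reachable states q, q' and every label α ∈ Σ ∪ ℝ≥0, q →α q' in TS'(TA) if and only if f(q) →α f(q') in TS(INV(TA)). -/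
/-- The valuation `ν₀` assigning `0` to every clock. -/
def zeroVal {C : Type} : Val C := fun _ => 0

/-- `ν + δ`: advance every clock by `δ`. -/
def shift {C : Type} (ν : Val C) (δ : NNReal) : Val C := fun x => ν x + δ

/-- A timed automaton `TA = (L, L₀, L_u, Σ, CX, I, E)` with location type `L`,
action alphabet `A` and clock type `C`:  a set of initial locations (nonempty),
a set of urgent locations, an invariant map, and a set of edges
`(l, a, φ, λ, l')` consisting of source, action, guard, reset set and target. -/
structure TA (L A C : Type) where
  init : Set L
  init_nonempty : init.Nonempty
  urgent : Set L
  inv : L → Val C → Prop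
  edges : Set (L × A × (Val C → Prop) × Set C × L)

/-- States of the associated transition systems: location/valuation pairs. -/
abbrev State (L C : Type) := L × Val C

/-- Initial states: initial locations paired with the zero valuation. -/
def TA.initStates {L A C : Type} (T : TA L A C) : Set (State L C) :=
  {p | p.1 ∈ T.init ∧ p.2 = zeroVal}

/-- Baseline semantics `TS(TA)`.  Labels are `Sum.inl a` for actions `a ∈ Σ`
and `Sum.inr δ` for delays `δ ∈ ℝ≥0`.  Action transitions require the target
invariant to hold; delay transitions require the source location not to be
urgent and the invariant to hold throughout the delay. -/
def TS {L A C : Type} (T : TA L A C) :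
    State L C → (A ⊕ NNReal) → State L C → Prop := fun p α q =>
  match α with
  | Sum.inl a => ∃ φ lam, (p.1, a, φ, lam, q.1) ∈ T.edges ∧ φ p.2 ∧
      q.2 = resetVal p.2 lam ∧ T.inv q.1 q.2
  | Sum.inr δ => p.1 ∉ T.urgent ∧ q.1 = p.1 ∧ q.2 = shift p.2 δ ∧
      ∀ k ≤ δ, T.inv p.1 (shift p.2 k)

/-- Unsatisfied-invariants semantics `TS'(TA)`: like `TS(TA)` except action
transitions do not require the target invariant to hold. -/
def TS' {L A C : Type} (T : TA L A C) :
    State L C → (A ⊕ NNReal) → State L C → Prop := fun p α q =>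
  match α with
  | Sum.inl a => ∃ φ lam, (p.1, a, φ, lam, q.1) ∈ T.edges ∧ φ p.2 ∧
      q.2 = resetVal p.2 lam
  | Sum.inr δ => p.1 ∉ T.urgent ∧ q.1 = p.1 ∧ q.2 = shift p.2 δ ∧
      ∀ k ≤ δ, T.inv p.1 (shift p.2 k)

/-- Reachable states: smallest set containing the initial states and closed
under the transition relation. -/
inductive Reachable {S Λ : Type} (init : Set S) (tr : S → Λ → S → Prop) : S → Prop
  | base {s : S} : s ∈ init → Reachable init tr s
  | step {s : S} {α : Λ} {s' : S} :
      Reachable init tr s → tr s α s' → Reachable init tr s'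

/-- The construction `INV(TA)` (for `TA` with no urgent locations).  Locations
are `L ⊕ L`: `Sum.inl l` is the original location `l`, `Sum.inr l` is its fresh
urgent copy `l_u`.  For each original edge `(l, a, φ, λ, l')`, four edges are
introduced, with guards `φ₁ = φ ∧ resetPred(I(l'), λ)` (semantically:
`φ ν ∧ I(l')(ν[λ:=0])`) and `φ₂ = φ ∧ ¬resetPred(I(l'), λ)`. -/
noncomputable def INV {L A C : Type} (T : TA L A C) : TA (L ⊕ L) A C where
  init := Sum.inl '' {l | l ∈ T.init ∧ T.inv l zeroVal} ∪
          Sum.inr '' {l | l ∈ T.init ∧ ¬ T.inv l zeroVal}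
  init_nonempty := by
    obtain ⟨l, hl⟩ := T.init_nonempty
    by_cases h : T.inv l zeroVal
    · exact ⟨Sum.inl l, Set.mem_union_left _ (Set.mem_image_of_mem _ ⟨hl, h⟩)⟩
    · exact ⟨Sum.inr l, Set.mem_union_right _ (Set.mem_image_of_mem _ ⟨hl, h⟩)⟩
  urgent := Set.range Sum.inr
  inv := fun l' ν =>
    match l' with
    | Sum.inl l => T.inv l ν
    | Sum.inr _ => True
  edges := { e | ∃ l a φ lam l', (l, a, φ, lam, l') ∈ T.edges ∧
      (e = (Sum.inl l, a, fun ν => φ ν ∧ T.inv l' (resetVal ν lam), lam, Sum.inl l') ∨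
       e = (Sum.inl l, a, fun ν => φ ν ∧ ¬ T.inv l' (resetVal ν lam), lam, Sum.inr l') ∨
       e = (Sum.inr l, a, fun ν => φ ν ∧ T.inv l' (resetVal ν lam), lam, Sum.inl l') ∨
       e = (Sum.inr l, a, fun ν => φ ν ∧ ¬ T.inv l' (resetVal ν lam), lam, Sum.inr l')) }

/-!
The isomorphism keeps the valuation and sends `(l, ν)` to `(l, ν)` when `ν ⊨ I(l)` and to
`(l_u, ν)` otherwise. The guards `φ₁`, `φ₂` of `INV(TA)` select exactly the copy of the target
location that records whether the target invariant holds, so action steps correspond. A delay of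
`TS'(TA)` needs `I(l)` at delay `0`, hence starts in a non-urgent copy; conversely the urgent
copies, where `TS(INV(TA))` cannot delay, hold exactly the states violating their invariant,
from which `TS'(TA)` cannot delay either.
-/

theorem Reachable.map {S S' Λ : Type} {init : Set S} {tr : S → Λ → S → Prop}
    {init' : Set S'} {tr' : S' → Λ → S' → Prop} {f : S → S'}
    (hinit : Set.MapsTo f init init') (htr : ∀ s α t, tr s α t → tr' (f s) α (f t))
    {s : S} (hs : Reachable init tr s) : Reachable init' tr' (f s) := by
  induction hs with
  | base h => exact .base (hinit h)
  | step _ h ih => exact .step ih (htr _ _ _ h)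

theorem Reachable.exists_of_lift {S S' Λ : Type} {init : Set S} {tr : S → Λ → S → Prop}
    {init' : Set S'} {tr' : S' → Λ → S' → Prop} {f : S → S'}
    (hinit : init' ⊆ f '' init) (hlift : ∀ s α t', tr' (f s) α t' → ∃ t, tr s α t ∧ f t = t')
    {s' : S'} (hs' : Reachable init' tr' s') : ∃ s, Reachable init tr s ∧ f s = s' := by
  induction hs' with
  | base h =>
    obtain ⟨s, hs, rfl⟩ := hinit h
    exact ⟨s, .base hs, rfl⟩
  | step _ h ih =>
    obtain ⟨s, hs, rfl⟩ := ih
    obtain ⟨t, ht, rfl⟩ := hlift _ _ _ h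
    exact ⟨t, .step hs ht, rfl⟩

theorem Reachable.image_eq {S S' Λ : Type} {init : Set S} {tr : S → Λ → S → Prop}
    {init' : Set S'} {tr' : S' → Λ → S' → Prop} {f : S → S'} (hinit : f '' init = init')
    (htr : ∀ s α t, tr s α t → tr' (f s) α (f t))
    (hlift : ∀ s α t', tr' (f s) α t' → ∃ t, tr s α t ∧ f t = t') :
    f '' {s | Reachable init tr s} = {s' | Reachable init' tr' s'} :=
  Set.Subset.antisymm
    (Set.image_subset_iff.2 fun _ hs =>
      Reachable.map (Set.mapsTo_iff_image_subset.2 hinit.le) htr hs)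
    fun _ hs' => Reachable.exists_of_lift hinit.ge hlift hs'

theorem shift_zero {C : Type} (ν : Val C) : shift ν 0 = ν := by
  funext x
  simp [shift]

def untag {L : Type} : L ⊕ L → L := Sum.elim id id

namespace TA

variable {L A C : Type} (T : TA L A C)

open Classical in
noncomputable def tag (l : L) (ν : Val C) : L ⊕ L :=
  if T.inv l ν then .inl l else .inr l

noncomputable def toINV (p : State L C) : State (L ⊕ L) C := (T.tag p.1 p.2, p.2)

variable {T}

@[simp]
theorem tag_eq_inl_iff {l l' : L} {ν : Val C} : T.tag l ν = .inl l' ↔ l = l' ∧ T.inv l ν := by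
  unfold tag
  split_ifs with h <;> simp [h]

@[simp]
theorem tag_eq_inr_iff {l l' : L} {ν : Val C} : T.tag l ν = .inr l' ↔ l = l' ∧ ¬T.inv l ν := by
  unfold tag
  split_ifs with h <;> simp [h]

@[simp]
theorem untag_tag (l : L) (ν : Val C) : untag (T.tag l ν) = l := by
  unfold tag
  split_ifs <;> rfl

theorem inv_INV_tag (l : L) (ν : Val C) : (INV T).inv (T.tag l ν) ν := by
  unfold tag
  split_ifs with h
  exacts [h, trivial]

theorem tag_notMem_urgent_INV_iff {l : L} {ν : Val C} :
    T.tag l ν ∉ (INV T).urgent ↔ T.inv l ν := by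
  unfold tag
  split_ifs with h <;> simp [INV, h]

theorem tag_untag_of_inv_INV {c : L ⊕ L} {ν : Val C} (hc : c ∉ (INV T).urgent)
    (h : (INV T).inv c ν) : T.tag (untag c) ν = c := by
  cases c
  · exact tag_eq_inl_iff.2 ⟨rfl, h⟩
  · simp [INV] at hc

theorem toINV_injective : Function.Injective T.toINV := by
  rintro ⟨l, ν⟩ ⟨l', ν'⟩ h
  simp only [toINV, Prod.mk.injEq] at h
  obtain ⟨hl, rfl⟩ := h
  simpa using congrArg untag hl

theorem INV_init_eq_image_tag : (INV T).init = (T.tag · zeroVal) '' T.init := by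
  ext c
  cases c <;> simp [INV, and_comm]

theorem toINV_image_initStates : T.toINV '' T.initStates = (INV T).initStates := by
  ext ⟨c, ν⟩
  simp only [initStates, INV_init_eq_image_tag, toINV, Set.mem_image, Set.mem_ofPred_eq,
    Prod.exists, Prod.mk.injEq]
  constructor
  · rintro ⟨l, _, ⟨hl, rfl⟩, rfl, rfl⟩
    exact ⟨⟨l, hl, rfl⟩, rfl⟩
  · rintro ⟨⟨l, hl, rfl⟩, rfl⟩
    exact ⟨l, _, ⟨hl, rfl⟩, rfl, rfl⟩

theorem mem_INV_edges_iff {s t : L ⊕ L} {a : A} {ψ : Val C → Prop} {lam : Set C} :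
    (s, a, ψ, lam, t) ∈ (INV T).edges ↔ ∃ φ, (untag s, a, φ, lam, untag t) ∈ T.edges ∧
      ψ = fun ν => φ ν ∧ T.tag (untag t) (resetVal ν lam) = t := by
  cases s <;> cases t <;> simp [INV, untag]

theorem TS'_iff_TS_INV (hu : T.urgent = ∅) (p q : State L C) (α : A ⊕ NNReal) :
    TS' T p α q ↔ TS (INV T) (T.toINV p) α (T.toINV q) := by
  cases α with
  | inl a =>
    constructor
    · rintro ⟨φ, lam, he, hφ, hq⟩
      refine ⟨_, lam, mem_INV_edges_iff.2 ⟨φ, by simpa [toINV] using he, rfl⟩, ⟨hφ, ?_⟩, hq,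
        inv_INV_tag _ _⟩
      simp [toINV, hq]
    · rintro ⟨ψ, lam, he, hψ, hq, -⟩
      obtain ⟨φ, hT, rfl⟩ := mem_INV_edges_iff.1 he
      exact ⟨φ, lam, by simpa [toINV] using hT, hψ.1, hq⟩
  | inr δ =>
    constructor
    · rintro ⟨-, hl, hν, hinv⟩
      have hp : T.inv p.1 p.2 := by simpa [shift_zero] using hinv 0 zero_le
      have hp_tag : T.tag p.1 p.2 = .inl p.1 := tag_eq_inl_iff.2 ⟨rfl, hp⟩
      have hq_tag : T.tag q.1 q.2 = .inl p.1 := tag_eq_inl_iff.2 ⟨hl, hl ▸ hν ▸ hinv δ le_rfl⟩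
      refine ⟨tag_notMem_urgent_INV_iff.2 hp, ?_, hν, ?_⟩
      · simp [toINV, hp_tag, hq_tag]
      · simpa [toINV, hp_tag, INV] using hinv
    · rintro ⟨hnu, hl, hν, hinv⟩
      have hp_tag : T.tag p.1 p.2 = .inl p.1 :=
        tag_eq_inl_iff.2 ⟨rfl, tag_notMem_urgent_INV_iff.1 hnu⟩
      simp only [toINV, hp_tag] at hl hinv
      exact ⟨by simp [hu], (tag_eq_inl_iff.1 hl).1, hν, hinv⟩

theorem exists_TS'_of_TS_INV (hu : T.urgent = ∅) {p : State L C} {α : A ⊕ NNReal}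
    {s' : State (L ⊕ L) C} (h : TS (INV T) (T.toINV p) α s') :
    ∃ q, TS' T p α q ∧ T.toINV q = s' := by
  suffices h_tag : T.tag (untag s'.1) s'.2 = s'.1 by
    have hq : T.toINV (untag s'.1, s'.2) = s' := Prod.ext h_tag rfl
    exact ⟨_, (TS'_iff_TS_INV hu p _ α).2 (by rwa [hq]), hq⟩
  cases α with
  | inl a =>
    obtain ⟨ψ, lam, he, hψ, hν, -⟩ := h
    obtain ⟨φ, -, rfl⟩ := mem_INV_edges_iff.1 he
    exact hν ▸ hψ.2
  | inr δ =>
    obtain ⟨hnu, hl, hν, hinv⟩ := h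
    exact tag_untag_of_inv_INV (hl ▸ hnu) (hl ▸ hν ▸ hinv δ le_rfl)

end TA

theorem statement_1_general {L A C : Type} (T : TA L A C) (hu : T.urgent = ∅) :
    ∃ f : State L C → State (L ⊕ L) C,
      Set.InjOn f {p | Reachable T.initStates (TS' T) p} ∧
      f '' {p | Reachable T.initStates (TS' T) p} =
        {q | Reachable (INV T).initStates (TS (INV T)) q} ∧
      f '' T.initStates = (INV T).initStates ∧
      (∀ p q, Reachable T.initStates (TS' T) p → Reachable T.initStates (TS' T) q →
        ∀ α : A ⊕ NNReal, TS' T p α q ↔ TS (INV T) (f p) α (f q)) :=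
  ⟨T.toINV, TA.toINV_injective.injOn,
    Reachable.image_eq TA.toINV_image_initStates
      (fun p α q => (TA.TS'_iff_TS_INV hu p q α).1) (fun _ _ _ => TA.exists_TS'_of_TS_INV hu),
    TA.toINV_image_initStates, fun p q _ _ => TA.TS'_iff_TS_INV hu p q⟩

/-- For a timed automaton `TA` with no urgent locations, the
reachable subsystems of `TS'(TA)` and `TS(INV(TA))` are isomorphic: there is a
bijection `f` from the reachable states of `TS'(TA)` onto the reachable states
of `TS(INV(TA))` mapping initial states exactly onto initial states and such
that for all reachable `q, q'` and labels `α`, `q →α q'` in `TS'(TA)` iff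
`f q →α f q'` in `TS(INV(TA))`. -/
theorem statement_1 {L A C : Type} [Fintype L] [Fintype A] [Fintype C] [Nonempty C]
    (T : TA L A C) (hu : T.urgent = ∅) :
    ∃ f : State L C → State (L ⊕ L) C,
      Set.InjOn f {p | Reachable T.initStates (TS' T) p} ∧
      f '' {p | Reachable T.initStates (TS' T) p} =
        {q | Reachable (INV T).initStates (TS (INV T)) q} ∧
      f '' T.initStates = (INV T).initStates ∧
      (∀ p q, Reachable T.initStates (TS' T) p → Reachable T.initStates (TS' T) q →
        ∀ α : A ⊕ NNReal, TS' T p α q ↔ TS (INV T) (f p) α (f q)) :=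
  statement_1_general T hu
end

section
/- Let TA = (L, L₀, ∅, Σ, CX, I, E) be a timed automaton with an empty set of urgent locations, and define f on states by f((l,ν)) = (l,ν) if ν ⊨ I(l) and f((l,ν)) = (l_u, ν) otherwise. For every action a ∈ Σ and all states (l,ν), (l',ν'): (l,ν) →a (l',ν') is an action transition in TS'(TA) if and only if f((l,ν)) →a f((l',ν')) is an action transition in TS(INV(TA)). -/
open Classical in
/-- The map `f` on states: `f((l,ν)) = (l,ν)` if `ν ⊨ I(l)`, and
`f((l,ν)) = (l_u, ν)` otherwise. -/
noncomputable def fINV {L A C : Type} (T : TA L A C) :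
    State L C → State (L ⊕ L) C := fun p =>
  if T.inv p.1 p.2 then (Sum.inl p.1, p.2) else (Sum.inr p.1, p.2)

/-- for every action `a ∈ Σ` and all states, `(l,ν) →a (l',ν')`
is an action transition in `TS'(TA)` iff `f((l,ν)) →a f((l',ν'))` is an action
transition in `TS(INV(TA))`. -/
theorem statement_5 {L A C : Type} [Fintype L] [Fintype A] [Fintype C] [Nonempty C]
    (T : TA L A C) (hu : T.urgent = ∅) :
    ∀ (a : A) (l l' : L) (ν ν' : Val C),
      TS' T (l, ν) (Sum.inl a) (l', ν') ↔
        TS (INV T) (fINV T (l, ν)) (Sum.inl a) (fINV T (l', ν')) := by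
  intro a l l' ν ν'
  constructor
  · rintro ⟨φ, lam, he, hφ, hν'⟩
    simp only at he hφ hν'
    by_cases h2 : T.inv l' ν'
    · refine ⟨fun ν => φ ν ∧ T.inv l' (resetVal ν lam), lam, ?_, ?_, ?_, ?_⟩
      · refine ⟨l, a, φ, lam, l', he, ?_⟩
        by_cases h1 : T.inv l ν <;> simp [fINV, h1, h2]
      · simp only [fINV]; split <;> exact ⟨hφ, hν' ▸ h2⟩
      · simp only [fINV]; split <;> split <;> simpa using hν'
      · simp [fINV, h2, INV]
    · refine ⟨fun ν => φ ν ∧ ¬ T.inv l' (resetVal ν lam), lam, ?_, ?_, ?_, ?_⟩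
      · refine ⟨l, a, φ, lam, l', he, ?_⟩
        by_cases h1 : T.inv l ν <;> simp [fINV, h1, h2]
      · simp only [fINV]; split <;> exact ⟨hφ, hν' ▸ h2⟩
      · simp only [fINV]; split <;> split <;> simpa using hν'
      · simp [fINV, h2, INV]
  · rintro ⟨ψ, lam, ⟨l0, a0, φ, lam0, l0', he, hcase⟩, hψ, hres, hinv⟩
    by_cases h1 : T.inv l ν <;> by_cases h2 : T.inv l' ν' <;>
      simp only [fINV, h1, h2, if_true, if_false, ite_true, ite_false,
        if_pos, if_neg, not_false_iff] at hψ hres hinv hcase <;>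
      rcases hcase with h | h | h | h <;>
      simp only [Prod.mk.injEq, Sum.inl.injEq, Sum.inr.injEq,
        reduceCtorEq, false_and, and_false] at h <;>
      obtain ⟨rfl, rfl, rfl, rfl, rfl⟩ := h <;>
      exact ⟨φ, lam, he, hψ.1, hres⟩
end

section
/- Let TA = (L, L₀, ∅, Σ, CX, I, E) be a timed automaton with an empty set of urgent locations. In TS(INV(TA)), any state of the form (l_u, ν) with l_u an urgent copy location and ν ⊨ I(l) is not reachable, and any state of the form (l, ν) with l ∈ L and ν ⊭ I(l) is reachable only if it is an initial state. Consequently, every reachable state of TS(INV(TA)) lies in the image of the map f defined by f((l,ν)) = (l,ν) if ν ⊨ I(l) and f((l,ν)) = (l_u, ν) otherwise. -/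

lemma key_inv {L A C : Type} (T : TA L A C) :
    ∀ q, Reachable (INV T).initStates (TS (INV T)) q →
      (∀ l, q.1 = Sum.inl l → T.inv l q.2) ∧ (∀ l, q.1 = Sum.inr l → ¬ T.inv l q.2) := by
  intro q hq
  induction hq with
  | base h =>
    obtain ⟨h1, h2⟩ := h
    rcases h1 with ⟨l, ⟨hl, hinv⟩, hll⟩ | ⟨l, ⟨hl, hinv⟩, hll⟩
    · constructor
      · intro l' hl'; rw [← hll] at hl'; cases hl'; rw [h2]; exact hinv
      · intro l' hl'; rw [← hll] at hl'; cases hl'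
    · constructor
      · intro l' hl'; rw [← hll] at hl'; cases hl'
      · intro l' hl'; rw [← hll] at hl'; cases hl'; rw [h2]; exact hinv
  | @step s α s' hr htr ih =>
    match α with
    | Sum.inl a =>
      obtain ⟨φ, lam, hedge, hφ, hreset, hinv⟩ := htr
      obtain ⟨l, a', φ', lam', l', horig, hcase⟩ := hedge
      rcases hcase with h | h | h | h <;>
      · injection h with h1 h; injection h with h2 h; injection h with h3 h
        injection h with h4 h5
        rw [h5] at hinv
        constructor
        · intro l'' hl''; rw [h5] at hl''
          first
          | (cases hl''; exact hinv)
          | (exact absurd hl'' (by simp))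
        · intro l'' hl''; rw [h5] at hl''
          first
          | (cases hl''; rw [hreset, h4]; exact (h3 ▸ hφ).2)
          | (exact absurd hl'' (by simp))
    | Sum.inr δ =>
      obtain ⟨hnu, hloc, hshift, hk⟩ := htr
      constructor
      · intro l hl
        have := hk δ le_rfl
        rw [hloc] at hl
        rw [hl] at this
        rw [hshift]; exact this
      · intro l hl
        exact absurd ⟨l, (hloc ▸ hl).symm⟩ hnu

/-- in `TS(INV(TA))`, a state `(l_u, ν)` with `ν ⊨ I(l)` is not
reachable; a state `(l, ν)` with `l ∈ L` and `ν ⊭ I(l)` is reachable only if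
it is initial; consequently every reachable state of `TS(INV(TA))` lies in the
image of `f`. -/
theorem statement_7 {L A C : Type} [Fintype L] [Fintype A] [Fintype C] [Nonempty C]
    (T : TA L A C) (hu : T.urgent = ∅) :
    (∀ (l : L) (ν : Val C), T.inv l ν →
        ¬ Reachable (INV T).initStates (TS (INV T)) (Sum.inr l, ν)) ∧
    (∀ (l : L) (ν : Val C), ¬ T.inv l ν →
        Reachable (INV T).initStates (TS (INV T)) (Sum.inl l, ν) →
        (Sum.inl l, ν) ∈ (INV T).initStates) ∧
    (∀ q : State (L ⊕ L) C, Reachable (INV T).initStates (TS (INV T)) q →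
        ∃ p : State L C, fINV T p = q) := by
  refine ⟨?_, ?_, ?_⟩
  · intro l ν hinv hr
    exact (key_inv T _ hr).2 l rfl hinv
  · intro l ν hninv hr
    exact absurd ((key_inv T _ hr).1 l rfl) hninv
  · intro q hr
    obtain ⟨h1, h2⟩ := key_inv T q hr
    match q with
    | (Sum.inl l, ν) =>
      exact ⟨(l, ν), by simp [fINV, h1 l rfl]⟩
    | (Sum.inr l, ν) =>
      exact ⟨(l, ν), by simp [fINV, h2 l rfl]⟩
end

section
/- Let TA = (L, L₀, L_u, Σ, CX, I, E) be a timed automaton. Then TS(TA) and TS'(URG(TA)) are isomorphic via the identity function on states: both transition systems have the same states and the same initial states, and for all states q, q' and every label α ∈ Σ ∪ ℝ≥0, q →α q' in TS(TA) if and only if q →α q' in TS'(URG(TA)). -/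
open Classical in
/-- The construction `URG(TA)`:  no urgent locations, invariant `false` on the
previously urgent locations, and each guard strengthened by
`resetPred(I(l'), λ)` (semantically: `I(l')(ν[λ:=0])`). -/
noncomputable def URG {L A C : Type} (T : TA L A C) : TA L A C where
  init := T.init
  init_nonempty := T.init_nonempty
  urgent := ∅
  inv := fun l ν => if l ∈ T.urgent then False else T.inv l ν
  edges := { e | ∃ l a φ lam l', (l, a, φ, lam, l') ∈ T.edges ∧
      e = (l, a, fun ν => φ ν ∧ T.inv l' (resetVal ν lam), lam, l') }

namespace URG

variable {L A C : Type} (T : TA L A C)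

theorem initStates_eq : (URG T).initStates = T.initStates := rfl

theorem inv_iff {l : L} {ν : Val C} : (URG T).inv l ν ↔ l ∉ T.urgent ∧ T.inv l ν := by
  simp only [URG]
  split_ifs with hu <;> simp [hu]

theorem mem_edges_iff {l l' : L} {a : A} {ψ : Val C → Prop} {lam : Set C} :
    (l, a, ψ, lam, l') ∈ (URG T).edges ↔
      ∃ φ, (l, a, φ, lam, l') ∈ T.edges ∧ ψ = fun ν => φ ν ∧ T.inv l' (resetVal ν lam) := by
  simp only [URG, Set.mem_ofPred_eq, Prod.mk.injEq]
  constructor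
  · rintro ⟨_, _, φ, _, _, he, rfl, rfl, rfl, rfl, rfl⟩
    exact ⟨φ, he, rfl⟩
  · rintro ⟨φ, he, rfl⟩
    exact ⟨l, a, φ, lam, l', he, rfl, rfl, rfl, rfl, rfl⟩

theorem TS_action_iff (p q : State L C) (a : A) :
    TS T p (Sum.inl a) q ↔ TS' (URG T) p (Sum.inl a) q := by
  simp only [TS, TS', mem_edges_iff]
  constructor
  · rintro ⟨φ, lam, he, hφ, hν, hinv⟩
    exact ⟨_, lam, ⟨φ, he, rfl⟩, ⟨hφ, hν ▸ hinv⟩, hν⟩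
  · rintro ⟨_, lam, ⟨φ, he, rfl⟩, ⟨hφ, hinv⟩, hν⟩
    exact ⟨φ, lam, he, hφ, hν, hν ▸ hinv⟩

-- The delay `k = 0` is always allowed, and `URG T` has invariant `false` at urgent
-- locations: this is what replaces the urgency check of `TS`.
theorem TS_delay_iff (p q : State L C) (δ : NNReal) :
    TS T p (Sum.inr δ) q ↔ TS' (URG T) p (Sum.inr δ) q := by
  simp only [TS, TS', inv_iff]
  constructor
  · rintro ⟨hu, hl, hν, hinv⟩
    exact ⟨Set.notMem_empty _, hl, hν, fun k hk => ⟨hu, hinv k hk⟩⟩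
  · rintro ⟨-, hl, hν, hinv⟩
    exact ⟨(hinv 0 zero_le).1, hl, hν, fun k hk => (hinv k hk).2⟩

end URG

theorem statement_8_general {L A C : Type}
    (T : TA L A C) :
    (URG T).initStates = T.initStates ∧
    ∀ (p q : State L C) (α : A ⊕ NNReal), TS T p α q ↔ TS' (URG T) p α q := by
  refine ⟨URG.initStates_eq T, fun p q α => ?_⟩
  cases α with
  | inl a => exact URG.TS_action_iff T p q a
  | inr δ => exact URG.TS_delay_iff T p q δ

/-- `TS(TA)` and `TS'(URG(TA))` are isomorphic via the identity on
states: they have the same states (the common type `State L C`) and the same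
initial states, and `q →α q'` in `TS(TA)` iff `q →α q'` in `TS'(URG(TA))`. -/
theorem statement_8 {L A C : Type} [Fintype L] [Fintype A] [Fintype C] [Nonempty C]
    (T : TA L A C) :
    (URG T).initStates = T.initStates ∧
    ∀ (p q : State L C) (α : A ⊕ NNReal), TS T p α q ↔ TS' (URG T) p α q :=
  statement_8_general T
end

section
/- Let TA = (L, L₀, L_u, Σ, CX, I, E) be a timed automaton. For every δ ∈ ℝ≥0 and all states (l,ν), (l',ν'): (l,ν) →δ (l',ν') is a delay transition in TS(TA) if and only if (l,ν) →δ (l',ν') is a delay transition in TS'(URG(TA)). -/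
@[simp]
theorem URG_urgent {L A C : Type} (T : TA L A C) : (URG T).urgent = ∅ := rfl

@[simp]
theorem URG_inv_iff {L A C : Type} (T : TA L A C) (l : L) (ν : Val C) :
    (URG T).inv l ν ↔ l ∉ T.urgent ∧ T.inv l ν := by
  by_cases hl : l ∈ T.urgent <;> simp [URG, hl]

theorem statement_9_general {L A C : Type}
    (T : TA L A C) :
    ∀ (δ : NNReal) (l l' : L) (ν ν' : Val C),
      TS T (l, ν) (Sum.inr δ) (l', ν') ↔ TS' (URG T) (l, ν) (Sum.inr δ) (l', ν') := by
  intro δ l l' ν ν'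
  simp only [TS, TS', URG_urgent, URG_inv_iff, Set.notMem_empty, not_false_eq_true, true_and]
  constructor
  · rintro ⟨hu, hl, hv, hinv⟩
    exact ⟨hl, hv, fun k hk => ⟨hu, hinv k hk⟩⟩
  · rintro ⟨hl, hv, hinv⟩
    -- the zero-length prefix of the delay already rules out an urgent source
    exact ⟨(hinv 0 zero_le).1, hl, hv, fun k hk => (hinv k hk).2⟩

/-- for every `δ ∈ ℝ≥0` and all states, `(l,ν) →δ (l',ν')` is a
delay transition in `TS(TA)` iff it is a delay transition in `TS'(URG(TA))`. -/
theorem statement_9 {L A C : Type} [Fintype L] [Fintype A] [Fintype C] [Nonempty C]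
    (T : TA L A C) :
    ∀ (δ : NNReal) (l l' : L) (ν ν' : Val C),
      TS T (l, ν) (Sum.inr δ) (l', ν') ↔ TS' (URG T) (l, ν) (Sum.inr δ) (l', ν') :=
  statement_9_general T
end

section
/- Let TA = (L, L₀, L_u, Σ, CX, I, E) be a timed automaton. For every action a ∈ Σ and all states (l,ν), (l',ν'): (l,ν) →a (l',ν') is an action transition in TS(TA) if and only if (l,ν) →a (l',ν') is an action transition in TS'(URG(TA)). -/
/-- for every action `a ∈ Σ` and all states, `(l,ν) →a (l',ν')`
is an action transition in `TS(TA)` iff it is an action transition in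
`TS'(URG(TA))`. -/
theorem statement_10 {L A C : Type} [Fintype L] [Fintype A] [Fintype C] [Nonempty C]
    (T : TA L A C) :
    ∀ (a : A) (l l' : L) (ν ν' : Val C),
      TS T (l, ν) (Sum.inl a) (l', ν') ↔ TS' (URG T) (l, ν) (Sum.inl a) (l', ν') := by
  intro a l l' ν ν'
  constructor
  · rintro ⟨φ, lam, he, hφ, hreset, hinv⟩
    exact ⟨fun w => φ w ∧ T.inv l' (resetVal w lam), lam,
      ⟨l, a, φ, lam, l', he, rfl⟩, ⟨hφ, hreset ▸ hinv⟩, hreset⟩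
  · rintro ⟨φ, lam, ⟨l₁, a₁, φ₁, lam₁, l₁', he, heq⟩, hφ, hreset⟩
    obtain ⟨h1, h2, h3, h4, h5⟩ : l = l₁ ∧ a = a₁ ∧
        φ = (fun ν => φ₁ ν ∧ T.inv l₁' (resetVal ν lam₁)) ∧ lam = lam₁ ∧ l' = l₁' := by
      simpa [Prod.ext_iff] using heq
    subst h1 h2 h3 h4 h5
    exact ⟨φ₁, lam, he, hφ.1, hreset, hreset ▸ hφ.2⟩
end
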